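/- Let g : ℕ → ℝ^{d_y×d_u} satisfy ‖G‖_⋆ = Σ_{t=0}^∞ t‖g_t‖_op < ∞, let u : ℤ → ℝ^{d_u} be bounded by ‖u_t‖ ≤ D_u for all t ∈ ℤ, and let ȳ_t = Σ_{s=0}^∞ g_s u_{t−s}. Define the N-point DFTs Ȳ_k = (1/√N) Σ_{t=0}^{N−1} ȳ_t e^{−jω_k t} and U_k = (1/√N) Σ_{t=0}^{N−1} u_t e^{−jω_k t} with ω_k = 2πk/N, and the transient term T_{k,N} = Ȳ_k − G(e^{jω_k}) U_k where G(e^{jω}) = Σ_{t=0}^∞ g_t e^{−jωt}. Then sup_{k∈{0,…,N−1}} ‖T_{k,N}‖ ≤ 2 ‖G‖_⋆ D_u / √N. -/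

import Mathlib

/-- View a finite tuple as an element of Euclidean space. -/
noncomputable def toEuc {m : ℕ} (x : Fin m → ℂ) : EuclideanSpace ℂ (Fin m) :=
  (WithLp.equiv 2 _).symm x

/-- The continuous linear map associated with a complex matrix (Euclidean norms). -/
noncomputable def matCLM {dy du : ℕ} (g : Matrix (Fin dy) (Fin du) ℂ) :
    EuclideanSpace ℂ (Fin du) →L[ℂ] EuclideanSpace ℂ (Fin dy) :=
  LinearMap.toContinuousLinearMap (Matrix.toEuclideanLin g)

/-- The continuous linear map associated with a real matrix (Euclidean norms). -/
noncomputable def matCLMR {dy du : ℕ} (g : Matrix (Fin dy) (Fin du) ℝ) :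
    EuclideanSpace ℝ (Fin du) →L[ℝ] EuclideanSpace ℝ (Fin dy) :=
  LinearMap.toContinuousLinearMap (Matrix.toEuclideanLin g)

/-- The frequency response `G(e^{jω}) = ∑_{t=0}^∞ g_t e^{−jωt}` of a real
impulse response, as a complex operator. -/
noncomputable def freqResp {dy du : ℕ} (g : ℕ → Matrix (Fin dy) (Fin du) ℝ) (ω : ℝ) :
    EuclideanSpace ℂ (Fin du) →L[ℂ] EuclideanSpace ℂ (Fin dy) :=
  ∑' t : ℕ, Complex.exp (-(ω : ℂ) * t * Complex.I) •
    matCLM ((g t).map fun x => (x : ℂ))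

/-- The `N`-point DFT of a real vector-valued signal, at frequency index `k`. -/
noncomputable def dftV {m : ℕ} (N : ℕ) (y : ℤ → Fin m → ℝ) (k : ℕ) : Fin m → ℂ :=
  fun i => (Real.sqrt N : ℂ)⁻¹ *
    ∑ t ∈ Finset.range N,
      (y t i : ℂ) * Complex.exp (-((2 * Real.pi * k * t / N : ℝ) : ℂ) * Complex.I)

/-- The noiseless output `ȳ_t = ∑_{s=0}^∞ g_s u_{t−s}`. -/
noncomputable def noiselessOutput {dy du : ℕ} (g : ℕ → Matrix (Fin dy) (Fin du) ℝ)
    (u : ℤ → Fin du → ℝ) : ℤ → Fin dy → ℝ :=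
  fun t i => ∑' s : ℕ, (g s).mulVec (u (t - (s : ℤ))) i

set_option maxHeartbeats 2000000

lemma euc_eq_of_coords {𝕜 : Type*} [RCLike 𝕜] {m : ℕ} {x y : EuclideanSpace 𝕜 (Fin m)}
    (h : ∀ i, x i = y i) : x = y := PiLp.ext h

lemma euc_sum_coord {𝕜 : Type*} [RCLike 𝕜] {m : ℕ} {α : Type*} (s : Finset α)
    (f : α → EuclideanSpace 𝕜 (Fin m)) (i : Fin m) :
    (∑ t ∈ s, f t) i = ∑ t ∈ s, f t i := by
  have h := map_sum (EuclideanSpace.proj (𝕜 := 𝕜) i) f s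
  rw [show ((EuclideanSpace.proj (𝕜 := 𝕜) i) (∑ t ∈ s, f t)) = (∑ t ∈ s, f t) i from rfl] at h
  rw [h]
  rfl

lemma euc_norm_sq_complex {m : ℕ} (w : EuclideanSpace ℂ (Fin m)) :
    ‖w‖ ^ 2 = (∑ i, (w i).re ^ 2) + ∑ i, (w i).im ^ 2 := by
  rw [EuclideanSpace.norm_eq, Real.sq_sqrt (Finset.sum_nonneg fun i _ => by positivity),
    ← Finset.sum_add_distrib]
  refine Finset.sum_congr rfl fun i _ => ?_
  rw [Complex.sq_norm, Complex.normSq_apply]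
  ring

lemma euc_norm_sq_real {m : ℕ} (w : EuclideanSpace ℝ (Fin m)) :
    ‖w‖ ^ 2 = ∑ i, (w i) ^ 2 := by
  rw [EuclideanSpace.norm_eq, Real.sq_sqrt (Finset.sum_nonneg fun i _ => by positivity)]
  refine Finset.sum_congr rfl fun i _ => by rw [Real.norm_eq_abs, sq_abs]

lemma matCLM_coord {dy du : ℕ} (g : Matrix (Fin dy) (Fin du) ℂ)
    (x : EuclideanSpace ℂ (Fin du)) (i : Fin dy) :
    matCLM g x i = ∑ j, g i j * x j := by
  simp [matCLM, Matrix.toEuclideanLin_apply,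
    Matrix.mulVec, dotProduct]

lemma matCLMR_coord {dy du : ℕ} (g : Matrix (Fin dy) (Fin du) ℝ)
    (x : EuclideanSpace ℝ (Fin du)) (i : Fin dy) :
    matCLMR g x i = ∑ j, g i j * x j := by
  simp [matCLMR, Matrix.toEuclideanLin_apply,
    Matrix.mulVec, dotProduct]

lemma matCLM_ofReal_apply_le {dy du : ℕ} (M : Matrix (Fin dy) (Fin du) ℝ)
    (x : EuclideanSpace ℂ (Fin du)) :
    ‖matCLM (M.map fun r => (r : ℂ)) x‖ ≤ ‖matCLMR M‖ * ‖x‖ := by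
  set a : EuclideanSpace ℝ (Fin du) := (WithLp.equiv 2 _).symm fun j => (x j).re with ha
  set b : EuclideanSpace ℝ (Fin du) := (WithLp.equiv 2 _).symm fun j => (x j).im with hb
  have hare : ∀ j, a j = (x j).re := fun j => rfl
  have hbim : ∀ j, b j = (x j).im := fun j => rfl
  have hre : ∀ i, ((matCLM (M.map fun r => (r : ℂ)) x) i).re = matCLMR M a i := by
    intro i
    rw [matCLM_coord, matCLMR_coord, Complex.re_sum]
    refine Finset.sum_congr rfl fun j _ => ?_
    simp [Matrix.map_apply, Complex.mul_re, hare]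
  have him : ∀ i, ((matCLM (M.map fun r => (r : ℂ)) x) i).im = matCLMR M b i := by
    intro i
    rw [matCLM_coord, matCLMR_coord, Complex.im_sum]
    refine Finset.sum_congr rfl fun j _ => ?_
    simp [Matrix.map_apply, Complex.mul_im, hbim]
  have h2 : ‖matCLM (M.map fun r => (r : ℂ)) x‖ ^ 2 = ‖matCLMR M a‖ ^ 2 + ‖matCLMR M b‖ ^ 2 := by
    rw [euc_norm_sq_complex, euc_norm_sq_real, euc_norm_sq_real]
    simp only [hre, him]
  have hx2 : ‖x‖ ^ 2 = ‖a‖ ^ 2 + ‖b‖ ^ 2 := by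
    rw [euc_norm_sq_complex, euc_norm_sq_real, euc_norm_sq_real]
    simp only [hare, hbim]
  have hMa := (matCLMR M).le_opNorm a
  have hMb := (matCLMR M).le_opNorm b
  have hfin : ‖matCLM (M.map fun r => (r : ℂ)) x‖ ^ 2 ≤ (‖matCLMR M‖ * ‖x‖) ^ 2 := by
    have s1 : ‖matCLMR M a‖ ^ 2 ≤ (‖matCLMR M‖ * ‖a‖) ^ 2 := by
      nlinarith [norm_nonneg (matCLMR M a)]
    have s2 : ‖matCLMR M b‖ ^ 2 ≤ (‖matCLMR M‖ * ‖b‖) ^ 2 := by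
      nlinarith [norm_nonneg (matCLMR M b)]
    rw [h2]
    calc ‖matCLMR M a‖ ^ 2 + ‖matCLMR M b‖ ^ 2
        ≤ (‖matCLMR M‖ * ‖a‖) ^ 2 + (‖matCLMR M‖ * ‖b‖) ^ 2 := add_le_add s1 s2
      _ = (‖matCLMR M‖ * ‖x‖) ^ 2 := by rw [mul_pow, mul_pow, mul_pow, ← mul_add, ← hx2]
  calc ‖matCLM (M.map fun r => (r : ℂ)) x‖
      = Real.sqrt (‖matCLM (M.map fun r => (r : ℂ)) x‖ ^ 2) :=
        (Real.sqrt_sq (norm_nonneg _)).symm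
    _ ≤ Real.sqrt ((‖matCLMR M‖ * ‖x‖) ^ 2) := Real.sqrt_le_sqrt hfin
    _ = ‖matCLMR M‖ * ‖x‖ := Real.sqrt_sq (by positivity)

lemma matCLM_ofReal_norm_le {dy du : ℕ} (M : Matrix (Fin dy) (Fin du) ℝ) :
    ‖matCLM (M.map fun r => (r : ℂ))‖ ≤ ‖matCLMR M‖ :=
  ContinuousLinearMap.opNorm_le_bound _ (norm_nonneg _) (matCLM_ofReal_apply_le M)

lemma sum_range_shift {α : Type*} [AddCommMonoid α] (v : ℤ → α) (N : ℕ) (a : ℤ) :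
    ∑ t ∈ Finset.range N, v ((t : ℤ) + a) = ∑ x ∈ Finset.Ico a (a + N), v x := by
  induction N with
  | zero => simp
  | succ n ih =>
      rw [Finset.sum_range_succ, ih,
        show a + ((n + 1 : ℕ) : ℤ) = (a + n) + 1 by push_cast; ring,
        show Finset.Ico a ((a + (n : ℤ)) + 1) = insert (a + n) (Finset.Ico a (a + n)) by
          ext x; simp only [Finset.mem_Ico, Finset.mem_insert]; omega,
        Finset.sum_insert (by simp), add_comm (n : ℤ) a]
      exact add_comm _ _

/-- **deterministic transient bound.** Under strict stability and
bounded inputs, `sup_{k∈[N]} ‖T_{k,N}‖ ≤ 2‖G‖_⋆ D_u/√N`, where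
`T_{k,N} = Ȳ_k − G(e^{jω_k})U_k`. -/
theorem deterministic_transient {dy du : ℕ} (g : ℕ → Matrix (Fin dy) (Fin du) ℝ)
    (hstar : Summable fun t : ℕ => (t : ℝ) * ‖matCLMR (g t)‖)
    (u : ℤ → Fin du → ℝ) (Du : ℝ)
    (hDu : ∀ t : ℤ, Real.sqrt (∑ r : Fin du, (u t r) ^ 2) ≤ Du)
    (N : ℕ) (hN : 0 < N) :
    ∀ k < N,
      ‖toEuc (fun i => dftV N (noiselessOutput g u) k i -
          freqResp g (2 * Real.pi * k / N) (toEuc (dftV N u k)) i)‖ ≤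
        2 * (∑' t : ℕ, (t : ℝ) * ‖matCLMR (g t)‖) * Du / Real.sqrt N := by
  intro k hk
  have hDu0 : 0 ≤ Du := le_trans (Real.sqrt_nonneg _) (hDu 0)
  have hNR : (0 : ℝ) < (N : ℝ) := by exact_mod_cast hN
  have hsN : (0 : ℝ) < Real.sqrt N := Real.sqrt_pos.mpr hNR
  set ω : ℝ := 2 * Real.pi * k / N with hω
  set A : ℕ → (EuclideanSpace ℂ (Fin du) →L[ℂ] EuclideanSpace ℂ (Fin dy)) :=
    fun s => matCLM ((g s).map fun r => (r : ℂ)) with hAdef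
  have hAx : ∀ (s : ℕ) (x : EuclideanSpace ℂ (Fin du)),
      ‖A s x‖ ≤ ‖matCLMR (g s)‖ * ‖x‖ := fun s x => matCLM_ofReal_apply_le (g s) x
  have hAop : ∀ s, ‖A s‖ ≤ ‖matCLMR (g s)‖ := fun s => matCLM_ofReal_norm_le (g s)
  have hgsum : Summable fun s : ℕ => ‖matCLMR (g s)‖ := by
    rw [← summable_nat_add_iff 1]
    refine Summable.of_nonneg_of_le (fun s => norm_nonneg _) (fun s => ?_)
      ((summable_nat_add_iff 1).mpr hstar)
    have h1 : (1 : ℝ) ≤ ((s + 1 : ℕ) : ℝ) := by push_cast; linarith [Nat.cast_nonneg (α := ℝ) s]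
    nlinarith [norm_nonneg (matCLMR (g (s + 1)))]
  set E : ℤ → ℂ := fun m => Complex.exp (-(ω : ℂ) * m * Complex.I) with hEdef
  have hEnorm : ∀ m : ℤ, ‖E m‖ = 1 := by
    intro m
    rw [hEdef]
    simp only [Complex.norm_exp]
    norm_num [Complex.mul_re, Complex.mul_im, Complex.I_re, Complex.I_im]
  have hEadd : ∀ a b : ℤ, E (a + b) = E a * E b := by
    intro a b
    simp only [hEdef, ← Complex.exp_add]
    congr 1
    push_cast
    ring
  set uc : ℤ → EuclideanSpace ℂ (Fin du) := fun t => toEuc fun i => ((u t i : ℝ) : ℂ) with hucdef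
  have huc_coord : ∀ (t : ℤ) (i : Fin du), uc t i = ((u t i : ℝ) : ℂ) := fun t i => rfl
  have hucD : ∀ t : ℤ, ‖uc t‖ ≤ Du := by
    intro t
    have h : ‖uc t‖ = Real.sqrt (∑ r : Fin du, (u t r) ^ 2) := by
      rw [EuclideanSpace.norm_eq]
      congr 1
      refine Finset.sum_congr rfl fun i _ => ?_
      rw [huc_coord]
      simp [Complex.norm_real, sq_abs]
    rw [h]; exact hDu t
  set v : ℤ → EuclideanSpace ℂ (Fin du) := fun t => E t • uc t with hvdef
  have hvD : ∀ t : ℤ, ‖v t‖ ≤ Du := by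
    intro t
    rw [hvdef]
    simp only
    rw [norm_smul, hEnorm, one_mul]
    exact hucD t
  set V : EuclideanSpace ℂ (Fin du) := ∑ t ∈ Finset.range N, v t with hVdef
  set c : ℂ := ((Real.sqrt N : ℝ) : ℂ)⁻¹ with hcdef
  have hsum_s : ∀ t : ℤ, Summable fun s : ℕ => A s (uc (t - s)) := by
    intro t
    refine Summable.of_norm (Summable.of_nonneg_of_le (fun _ => norm_nonneg _)
      (fun s => ?_) (hgsum.mul_right Du))
    exact (hAx s _).trans (mul_le_mul_of_nonneg_left (hucD _) (norm_nonneg _))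
  have hexp_eq : ∀ t : ℕ,
      Complex.exp (-((2 * Real.pi * k * t / N : ℝ) : ℂ) * Complex.I) = E t := by
    intro t
    rw [hEdef]
    congr 2
    push_cast [hω]
    ring
  have hU : toEuc (dftV N u k) = c • V := by
    apply euc_eq_of_coords
    intro i
    rw [show toEuc (dftV N u k) i = dftV N u k i from rfl, dftV, PiLp.smul_apply, hVdef,
      euc_sum_coord, smul_eq_mul]
    congr 1
    refine Finset.sum_congr rfl fun t _ => ?_
    rw [hvdef]
    simp only [PiLp.smul_apply, smul_eq_mul, huc_coord, hexp_eq t]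
    ring
  have hY : toEuc (dftV N (noiselessOutput g u) k)
      = c • ∑ t ∈ Finset.range N, E t • (∑' s : ℕ, A s (uc ((t : ℤ) - s))) := by
    apply euc_eq_of_coords
    intro i
    rw [show toEuc (dftV N (noiselessOutput g u) k) i = dftV N (noiselessOutput g u) k i from rfl,
      dftV, PiLp.smul_apply, euc_sum_coord, smul_eq_mul]
    congr 1
    refine Finset.sum_congr rfl fun t _ => ?_
    rw [PiLp.smul_apply, smul_eq_mul, hexp_eq t,
      mul_comm ((noiselessOutput g u t i : ℝ) : ℂ) (E t)]
    congr 1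
    have hco := ContinuousLinearMap.map_tsum (EuclideanSpace.proj (𝕜 := ℂ) i)
      (hsum_s (t : ℤ))
    rw [show ((EuclideanSpace.proj (𝕜 := ℂ) i) (∑' s : ℕ, A s (uc ((t : ℤ) - s))))
        = (∑' s : ℕ, A s (uc ((t : ℤ) - s))) i from rfl] at hco
    rw [hco, noiselessOutput, Complex.ofReal_tsum]
    refine tsum_congr fun s => ?_
    rw [show (EuclideanSpace.proj (𝕜 := ℂ) i) (A s (uc ((t : ℤ) - s)))
        = (A s (uc ((t : ℤ) - s))) i from rfl, hAdef]
    simp only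
    rw [matCLM_coord]
    simp only [huc_coord, Matrix.map_apply, Matrix.mulVec, dotProduct]
    push_cast
    rfl
  have hop : Summable fun s : ℕ => E s • A s := by
    refine Summable.of_norm (Summable.of_nonneg_of_le (fun _ => norm_nonneg _)
      (fun s => ?_) hgsum)
    calc ‖E (s : ℤ) • A s‖ ≤ ‖E (s : ℤ)‖ * ‖A s‖ := ContinuousLinearMap.opNorm_smul_le _ _
      _ = ‖A s‖ := by rw [hEnorm, one_mul]
      _ ≤ ‖matCLMR (g s)‖ := hAop s
  have hfr : freqResp g ω = ∑' s : ℕ, E s • A s := by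
    rw [freqResp]
    refine tsum_congr fun s => ?_
    rw [show matCLM ((g s).map fun x => (x : ℂ)) = A s from rfl, hEdef]
    norm_cast
  have hS3 : Summable fun s : ℕ => E s • A s V := by
    refine Summable.of_norm (Summable.of_nonneg_of_le (fun _ => norm_nonneg _)
      (fun s => ?_) (hgsum.mul_right ‖V‖))
    show ‖E (s : ℤ) • A s V‖ ≤ ‖matCLMR (g s)‖ * ‖V‖
    rw [norm_smul, hEnorm, one_mul]
    exact (A s).le_opNorm V |>.trans (mul_le_mul_of_nonneg_right (hAop s) (norm_nonneg V))
  have happly : freqResp g ω (toEuc (dftV N u k)) = c • ∑' s : ℕ, E s • A s V := by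
    rw [hU, hfr]
    have h1 := ContinuousLinearMap.map_tsum
      ((ContinuousLinearMap.apply ℂ (EuclideanSpace ℂ (Fin dy))) (c • V)) hop
    rw [show ((ContinuousLinearMap.apply ℂ (EuclideanSpace ℂ (Fin dy))) (c • V))
        (∑' s : ℕ, E s • A s) = (∑' s : ℕ, E s • A s) (c • V) from rfl] at h1
    rw [h1, ← Summable.tsum_const_smul c hS3]
    refine tsum_congr fun s => ?_
    rw [show ((ContinuousLinearMap.apply ℂ (EuclideanSpace ℂ (Fin dy))) (c • V)) (E s • A s)
        = (E s • A s) (c • V) from rfl]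
    rw [ContinuousLinearMap.smul_apply, map_smul, smul_comm (E (s : ℤ)) c]
  have hsum_t : ∀ t ∈ Finset.range N, Summable fun s : ℕ => E t • A s (uc ((t : ℤ) - s)) :=
    fun t _ => (hsum_s (t : ℤ)).const_smul (E t)
  have hswap : ∑ t ∈ Finset.range N, E t • (∑' s : ℕ, A s (uc ((t : ℤ) - s)))
      = ∑' s : ℕ, ∑ t ∈ Finset.range N, E t • A s (uc ((t : ℤ) - s)) := by
    rw [Summable.tsum_finsetSum hsum_t]
    refine Finset.sum_congr rfl fun t _ => ?_
    exact (Summable.tsum_const_smul (E t) (hsum_s (t : ℤ))).symm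
  have hS2 : Summable fun s : ℕ => ∑ t ∈ Finset.range N, E t • A s (uc ((t : ℤ) - s)) := by
    refine Summable.of_norm (Summable.of_nonneg_of_le (fun _ => norm_nonneg _)
      (fun s => ?_) (hgsum.mul_left ((N : ℝ) * Du)))
    calc ‖∑ t ∈ Finset.range N, E t • A s (uc ((t : ℤ) - s))‖
        ≤ ∑ t ∈ Finset.range N, ‖E t • A s (uc ((t : ℤ) - s))‖ := norm_sum_le _ _
      _ ≤ ∑ _t ∈ Finset.range N, ‖matCLMR (g s)‖ * Du := by
          refine Finset.sum_le_sum fun t _ => ?_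
          rw [norm_smul, hEnorm, one_mul]
          exact (hAx s _).trans (mul_le_mul_of_nonneg_left (hucD _) (norm_nonneg _))
      _ = (N : ℝ) * Du * ‖matCLMR (g s)‖ := by
          rw [Finset.sum_const, Finset.card_range, nsmul_eq_mul]
          ring
  set Fv : ℕ → EuclideanSpace ℂ (Fin du) :=
    fun s => (∑ t ∈ Finset.range N, v ((t : ℤ) - s)) - V with hFvdef
  have hDs : ∀ s : ℕ, (∑ t ∈ Finset.range N, E t • A s (uc ((t : ℤ) - s))) - E s • A s V
      = E s • A s (Fv s) := by
    intro s
    have h1 : ∀ t : ℕ, E t • A s (uc ((t : ℤ) - s)) = E s • A s (v ((t : ℤ) - s)) := by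
      intro t
      rw [hvdef]
      simp only
      rw [map_smul, smul_smul, ← hEadd, show (s : ℤ) + ((t : ℤ) - s) = (t : ℤ) by ring]
    rw [Finset.sum_congr rfl fun t _ => h1 t, ← Finset.smul_sum, ← map_sum, ← smul_sub,
      ← map_sub, hFvdef]
  have hmain : toEuc (fun i => dftV N (noiselessOutput g u) k i
        - freqResp g ω (toEuc (dftV N u k)) i)
      = c • ∑' s : ℕ, E s • A s (Fv s) := by
    have hsplit : toEuc (fun i => dftV N (noiselessOutput g u) k i
          - freqResp g ω (toEuc (dftV N u k)) i)
        = toEuc (dftV N (noiselessOutput g u) k) - freqResp g ω (toEuc (dftV N u k)) := by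
      apply euc_eq_of_coords
      intro i
      rw [PiLp.sub_apply]
      rfl
    rw [hsplit, hY, happly, hswap, ← smul_sub, ← Summable.tsum_sub hS2 hS3]
    congr 1
    exact tsum_congr fun s => hDs s
  have hFnorm : ∀ s : ℕ, ‖Fv s‖ ≤ 2 * s * Du := by
    intro s
    rw [hFvdef]
    simp only
    have hA1 : ∑ t ∈ Finset.range N, v ((t : ℤ) - s)
        = ∑ x ∈ Finset.Ico (-(s : ℤ)) (-(s : ℤ) + N), v x := by
      rw [← sum_range_shift v N (-(s : ℤ))]
      refine Finset.sum_congr rfl fun t _ => ?_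
      rw [sub_eq_add_neg]
    have hB1 : V = ∑ x ∈ Finset.Ico (0 : ℤ) ((0 : ℤ) + N), v x := by
      rw [hVdef, ← sum_range_shift v N 0]
      simp
    rw [hA1, hB1, ← Finset.sum_sdiff_sub_sum_sdiff]
    have hc1 : ((Finset.Ico (-(s : ℤ)) (-(s : ℤ) + N)) \ (Finset.Ico (0 : ℤ) ((0 : ℤ) + N))).card
        ≤ s := by
      have hsub : ((Finset.Ico (-(s : ℤ)) (-(s : ℤ) + N)) \ (Finset.Ico (0 : ℤ) ((0 : ℤ) + N)))
          ⊆ Finset.Ico (-(s : ℤ)) 0 := by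
        intro x hx
        simp only [Finset.mem_sdiff, Finset.mem_Ico, not_and, not_lt] at hx ⊢
        omega
      calc _ ≤ (Finset.Ico (-(s : ℤ)) 0).card := Finset.card_le_card hsub
        _ = s := by rw [Int.card_Ico]; omega
    have hc2 : ((Finset.Ico (0 : ℤ) ((0 : ℤ) + N)) \ (Finset.Ico (-(s : ℤ)) (-(s : ℤ) + N))).card
        ≤ s := by
      have hsub : ((Finset.Ico (0 : ℤ) ((0 : ℤ) + N)) \ (Finset.Ico (-(s : ℤ)) (-(s : ℤ) + N)))
          ⊆ Finset.Ico (-(s : ℤ) + N) ((0 : ℤ) + N) := by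
        intro x hx
        simp only [Finset.mem_sdiff, Finset.mem_Ico, not_and, not_lt] at hx ⊢
        omega
      calc _ ≤ (Finset.Ico (-(s : ℤ) + N) ((0 : ℤ) + N)).card := Finset.card_le_card hsub
        _ = s := by rw [Int.card_Ico]; omega
    have hbound : ∀ S : Finset ℤ, ‖∑ x ∈ S, v x‖ ≤ (S.card : ℝ) * Du := by
      intro S
      calc ‖∑ x ∈ S, v x‖ ≤ ∑ x ∈ S, ‖v x‖ := norm_sum_le _ _
        _ ≤ (S.card : ℝ) * Du := by
            have := Finset.sum_le_card_nsmul S (fun x => ‖v x‖) Du (fun x _ => hvD x)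
            rwa [nsmul_eq_mul] at this
    calc ‖_ - _‖ ≤ _ + _ := norm_sub_le _ _
      _ ≤ (((Finset.Ico (-(s : ℤ)) (-(s : ℤ) + N)) \ (Finset.Ico (0 : ℤ) ((0 : ℤ) + N))).card : ℝ)
            * Du
          + (((Finset.Ico (0 : ℤ) ((0 : ℤ) + N)) \ (Finset.Ico (-(s : ℤ)) (-(s : ℤ) + N))).card : ℝ)
            * Du := add_le_add (hbound _) (hbound _)
      _ ≤ (s : ℝ) * Du + (s : ℝ) * Du :=
          add_le_add (mul_le_mul_of_nonneg_right (by exact_mod_cast hc1) hDu0)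
            (mul_le_mul_of_nonneg_right (by exact_mod_cast hc2) hDu0)
      _ = 2 * s * Du := by ring
  have hterm : ∀ s : ℕ, ‖E s • A s (Fv s)‖ ≤ 2 * Du * ((s : ℝ) * ‖matCLMR (g s)‖) := by
    intro s
    rw [norm_smul, hEnorm, one_mul]
    calc ‖A s (Fv s)‖ ≤ ‖matCLMR (g s)‖ * ‖Fv s‖ := hAx s _
      _ ≤ ‖matCLMR (g s)‖ * (2 * s * Du) :=
          mul_le_mul_of_nonneg_left (hFnorm s) (norm_nonneg _)
      _ = 2 * Du * ((s : ℝ) * ‖matCLMR (g s)‖) := by ring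
  have htsum_le : ‖∑' s : ℕ, E s • A s (Fv s)‖
      ≤ 2 * Du * ∑' t : ℕ, (t : ℝ) * ‖matCLMR (g t)‖ := by
    have hsum2 : Summable fun s : ℕ => 2 * Du * ((s : ℝ) * ‖matCLMR (g s)‖) := hstar.mul_left _
    have h := tsum_of_norm_bounded hsum2.hasSum hterm
    rwa [tsum_mul_left] at h
  rw [hmain, norm_smul]
  have hcnorm : ‖c‖ = (Real.sqrt N)⁻¹ := by
    rw [hcdef, norm_inv, Complex.norm_real, Real.norm_eq_abs,
      abs_of_nonneg (Real.sqrt_nonneg _)]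
  rw [hcnorm]
  calc (Real.sqrt N)⁻¹ * ‖∑' s : ℕ, E s • A s (Fv s)‖
      ≤ (Real.sqrt N)⁻¹ * (2 * Du * ∑' t : ℕ, (t : ℝ) * ‖matCLMR (g t)‖) :=
        mul_le_mul_of_nonneg_left htsum_le (by positivity)
    _ = 2 * (∑' t : ℕ, (t : ℝ) * ‖matCLMR (g t)‖) * Du / Real.sqrt N := by
        field_simp
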